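/- Let A and B be positive semidefinite symmetric matrices with A ⪯ B (i.e., x^T A x ≤ x^T B x for all x). Then for all x orthogonal to the kernel of A, x^T A^+ x ≥ x^T B^+ x, where A^+ denotes the Moore–Penrose pseudoinverse. -/

import Mathlib

open Matrix

/-!
For positive semidefinite `A` and `x = A p`, completing the square gives
`2 ⟪x, y⟫ - yᵀ A y ≤ pᵀ A p = xᵀ A⁺ x` for every `y`, with equality at `y = p`; so `xᵀ A⁺ x` is
the supremum over `y` of `2 ⟪x, y⟫ - yᵀ A y`, which can only decrease when `A` is replaced by
`B ⪰ A`. The hypothesis on `x` places it in the range of `A`, and, since `ker B ⊆ ker A`, also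
in the range of `B`.
-/

/-- `P` is the Moore–Penrose pseudoinverse of `A`: the four Penrose conditions. -/
def IsMoorePenrose {n : ℕ} (A P : Matrix (Fin n) (Fin n) ℝ) : Prop :=
  A * P * A = A ∧ P * A * P = P ∧ (A * P)ᵀ = A * P ∧ (P * A)ᵀ = P * A

namespace Matrix

variable {m : Type*}

theorem PosSemidef.transpose_eq {A : Matrix m m ℝ} (hA : A.PosSemidef) : Aᵀ = A :=
  (conjTranspose_eq_transpose_of_trivial A).symm.trans hA.1

variable [Fintype m]

theorem mulVec_transpose_mulVec_eq_self_of_orthogonal_ker {M R : Matrix m m ℝ}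
    (hM : Mᵀ = M) (hMRM : M * R * M = M) (hRM : (R * M)ᵀ = R * M) {x : m → ℝ}
    (hx : ∀ y, M *ᵥ y = 0 → x ⬝ᵥ y = 0) :
    M *ᵥ (Rᵀ *ᵥ x) = x := by
  -- `z` lies in `ker M`, so it is orthogonal to `x` and to `R M x`, hence to itself.
  set z := x - (R * M) *ᵥ x with hz
  have hMz : M *ᵥ z = 0 := by
    rw [hz, mulVec_sub, mulVec_mulVec, ← Matrix.mul_assoc, hMRM, sub_self]
  have hRMx : (R * M) *ᵥ x ⬝ᵥ z = 0 := by
    rw [dotProduct_comm, ← dotProduct_transpose_mulVec, hRM, ← mulVec_mulVec, hMz,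
      mulVec_zero, dotProduct_zero]
  have hz0 : z = 0 := by
    rw [← dotProduct_self_eq_zero]
    nth_rewrite 1 [hz]
    rw [sub_dotProduct, hx z hMz, hRMx, sub_zero]
  calc M *ᵥ (Rᵀ *ᵥ x) = (R * M)ᵀ *ᵥ x := by rw [mulVec_mulVec, transpose_mul, hM]
    _ = x := by rw [hRM]; exact (sub_eq_zero.mp (hz.symm.trans hz0)).symm

theorem PosSemidef.mulVec_eq_zero_of_le {A B : Matrix m m ℝ} (hA : A.PosSemidef)
    (hAB : ∀ x, x ⬝ᵥ A *ᵥ x ≤ x ⬝ᵥ B *ᵥ x) {y : m → ℝ} (hy : B *ᵥ y = 0) :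
    A *ᵥ y = 0 := by
  refine (hA.dotProduct_mulVec_zero_iff y).mp (le_antisymm ?_ (hA.dotProduct_mulVec_nonneg y))
  simpa [hy] using hAB y

theorem PosSemidef.two_mul_dotProduct_sub_le {A : Matrix m m ℝ} (hA : A.PosSemidef)
    (p y : m → ℝ) :
    2 * (A *ᵥ p ⬝ᵥ y) - y ⬝ᵥ A *ᵥ y ≤ p ⬝ᵥ A *ᵥ p := by
  have hsq : 0 ≤ (p - y) ⬝ᵥ A *ᵥ (p - y) := by simpa using hA.dotProduct_mulVec_nonneg (p - y)
  have hsymm : p ⬝ᵥ A *ᵥ y = A *ᵥ p ⬝ᵥ y := by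
    rw [← dotProduct_transpose_mulVec, hA.transpose_eq, dotProduct_comm]
  rw [mulVec_sub, sub_dotProduct, dotProduct_sub, dotProduct_sub, hsymm] at hsq
  linarith [dotProduct_comm y (A *ᵥ p)]

end Matrix

/-- If `A ⪯ B` are positive semidefinite symmetric matrices, then for all `x`
orthogonal to the kernel of `A`, `xᵀ A⁺ x ≥ xᵀ B⁺ x`. -/
theorem stmt_7 {n : ℕ} (A B P Q : Matrix (Fin n) (Fin n) ℝ)
    (hA : A.PosSemidef) (hB : B.PosSemidef)
    (hAB : ∀ x : Fin n → ℝ, x ⬝ᵥ A.mulVec x ≤ x ⬝ᵥ B.mulVec x)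
    (hP : IsMoorePenrose A P) (hQ : IsMoorePenrose B Q)
    (x : Fin n → ℝ) (hx : ∀ y : Fin n → ℝ, A.mulVec y = 0 → x ⬝ᵥ y = 0) :
    x ⬝ᵥ Q.mulVec x ≤ x ⬝ᵥ P.mulVec x := by
  obtain ⟨hAPA, -, -, hPA⟩ := hP
  obtain ⟨hBQB, -, -, hQB⟩ := hQ
  have hxB : ∀ y, B *ᵥ y = 0 → x ⬝ᵥ y = 0 := fun y hy ↦
    hx y (hA.mulVec_eq_zero_of_le hAB hy)
  have hp := mulVec_transpose_mulVec_eq_self_of_orthogonal_ker hA.transpose_eq hAPA hPA hx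
  have hy := mulVec_transpose_mulVec_eq_self_of_orthogonal_ker hB.transpose_eq hBQB hQB hxB
  set p := Pᵀ *ᵥ x
  set y := Qᵀ *ᵥ x
  calc x ⬝ᵥ Q *ᵥ x = 2 * (x ⬝ᵥ y) - y ⬝ᵥ B *ᵥ y := by
        rw [hy, ← dotProduct_transpose_mulVec, dotProduct_comm y]; ring
    _ ≤ 2 * (A *ᵥ p ⬝ᵥ y) - y ⬝ᵥ A *ᵥ y := by rw [hp]; linarith [hAB y]
    _ ≤ p ⬝ᵥ A *ᵥ p := hA.two_mul_dotProduct_sub_le p y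
    _ = x ⬝ᵥ P *ᵥ x := by rw [hp, dotProduct_comm, dotProduct_transpose_mulVec]
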